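/- For τ in the upper half plane, the Euler pentagonal-type theta identity η(τ) = ∑_{n ∈ ℤ} (-1)^n e^{πiτ(6n+1)²/12} holds, where η(τ) = e^{πiτ/12} ∏_{m≥1}(1 - e^{2πimτ}). -/

import Mathlib

open Finset
namespace PentNT


/-- Partitions of `n` into distinct positive parts, as finsets. -/
def Fn (n : ℕ) : Finset (Finset ℕ) :=
  ((Finset.range (n+1)).powerset).filter (fun T => 0 ∉ T ∧ T.sum id = n)

lemma mem_Fn {n : ℕ} {T : Finset ℕ} : T ∈ Fn n ↔ 0 ∉ T ∧ T.sum id = n := by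
  constructor
  · intro h; exact (mem_filter.1 h).2
  · intro h
    refine mem_filter.2 ⟨mem_powerset.2 fun x hx => ?_, h⟩
    have hx1 : x ≤ T.sum id := Finset.single_le_sum (fun i _ => Nat.zero_le i) hx
    exact mem_range.2 (by omega)


lemma sum_Icc_id {a b : ℕ} (hab : a ≤ b) :
    2 * (Icc (a+1) b).sum id + a * (a+1) = b * (b+1) := by
  induction b with
  | zero => interval_cases a <;> simp
  | succ b ih =>
    rcases Nat.eq_or_lt_of_le hab with h | h
    · subst h; rw [Finset.Icc_eq_empty (by omega)]; simp
    · have hab' : a ≤ b := by omega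
      have hins : Icc (a+1) (b+1) = insert (b+1) (Icc (a+1) b) := by
        ext x; simp only [mem_Icc, mem_insert]; omega
      rw [hins, Finset.sum_insert (by simp)]
      have := ih hab'
      simp only [id] at *
      nlinarith [this]

lemma sumA (k : ℕ) : 2 * (Icc (k+1) (2*k)).sum id = k * (3*k+1) := by
  have := sum_Icc_id (a := k) (b := 2*k) (by omega)
  nlinarith [this]

lemma sumB (k : ℕ) : 2 * (Icc (k+1) (2*k+1)).sum id = (k+1) * (3*k+2) := by
  have := sum_Icc_id (a := k) (b := 2*k+1) (by omega)
  nlinarith [this]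

lemma cardA (k : ℕ) : (Icc (k+1) (2*k)).card = k := by rw [Nat.card_Icc]; omega
lemma cardB (k : ℕ) : (Icc (k+1) (2*k+1)).card = k + 1 := by rw [Nat.card_Icc]; omega


variable {T : Finset ℕ}

lemma filter_run_nonempty (h : T.Nonempty) :
    (T.filter fun x => Finset.Icc x (T.max' h) ⊆ T).Nonempty :=
  ⟨T.max' h, mem_filter.2 ⟨T.max'_mem h, by
    rw [Finset.Icc_self, Finset.singleton_subset_iff]; exact T.max'_mem h⟩⟩

/-- The bottom of the maximal run of consecutive elements ending at the max. -/
def L (T : Finset ℕ) (h : T.Nonempty) : ℕ :=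
  (T.filter fun x => Finset.Icc x (T.max' h) ⊆ T).min' (filter_run_nonempty h)

lemma L_mem (h : T.Nonempty) : L T h ∈ T :=
  (mem_filter.1 ((T.filter _).min'_mem (filter_run_nonempty h))).1

lemma Icc_L_subset (h : T.Nonempty) : Finset.Icc (L T h) (T.max' h) ⊆ T :=
  (mem_filter.1 ((T.filter _).min'_mem (filter_run_nonempty h))).2

lemma L_le_max (h : T.Nonempty) : L T h ≤ T.max' h := T.le_max' _ (L_mem h)

lemma min_le_L (h : T.Nonempty) : T.min' h ≤ L T h := T.min'_le _ (L_mem h)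

lemma L_pos (h : T.Nonempty) (h0 : 0 ∉ T) : 1 ≤ L T h := by
  rcases Nat.eq_zero_or_pos (L T h) with hL | hL
  · exact absurd (hL ▸ L_mem h) h0
  · exact hL

lemma pred_L_not_mem (h : T.Nonempty) (h0 : 0 ∉ T) : L T h - 1 ∉ T := by
  intro hmem
  have h1 : 1 ≤ L T h := L_pos h h0
  have hsub : Finset.Icc (L T h - 1) (T.max' h) ⊆ T := by
    intro x hx
    rw [mem_Icc] at hx
    rcases Nat.eq_or_lt_of_le hx.1 with h' | h'
    · exact h' ▸ hmem
    · exact Icc_L_subset h (mem_Icc.2 ⟨by omega, hx.2⟩)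
  have : L T h ≤ L T h - 1 :=
    Finset.min'_le _ _ (mem_filter.2 ⟨hmem, hsub⟩)
  omega

/-- Characterization used to compute `L` of modified sets. -/
lemma L_eq (h : T.Nonempty) (x : ℕ) (hx : x ∈ T)
    (hsub : Finset.Icc x (T.max' h) ⊆ T) (hpred : x - 1 ∉ T) (hx1 : 1 ≤ x) :
    L T h = x := by
  have hle : L T h ≤ x := Finset.min'_le _ _ (mem_filter.2 ⟨hx, hsub⟩)
  rcases Nat.eq_or_lt_of_le hle with h' | h'
  · exact h'
  · exfalso
    have hxM : x ≤ T.max' h := T.le_max' _ hx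
    have : x - 1 ∈ T := Icc_L_subset h (mem_Icc.2 ⟨by omega, by omega⟩)
    exact hpred this

/-- Franklin's involution. -/
def phi (T : Finset ℕ) : Finset ℕ :=
  if h : T.Nonempty then
    if T.min' h + L T h ≤ T.max' h + 1 then
      insert (T.max' h + 1) ((T.erase (T.min' h)).erase (T.max' h + 1 - T.min' h))
    else
      insert (T.max' h + 1 - L T h) (insert (L T h - 1) (T.erase (T.max' h)))
  else ∅


def IsPent (T : Finset ℕ) : Prop :=
  ∃ k : ℕ, T = Icc (k+1) (2*k) ∨ T = Icc (k+1) (2*k+1)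

lemma eq_Icc_minmax {S : Finset ℕ} (hS : S.Nonempty) {a b : ℕ} (h : S = Icc a b) :
    S.min' hS = a ∧ S.max' hS = b := by
  subst h
  have hab : a ≤ b := by
    rcases hS with ⟨x, hx⟩; rw [mem_Icc] at hx; omega
  constructor
  · exact le_antisymm (min'_le _ _ (mem_Icc.2 ⟨le_refl a, hab⟩))
      (le_min' _ _ _ fun y hy => (mem_Icc.1 hy).1)
  · exact le_antisymm (max'_le _ _ _ fun y hy => (mem_Icc.1 hy).2)
      (le_max' _ _ (mem_Icc.2 ⟨hab, le_refl b⟩))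


lemma min'_pos {T : Finset ℕ} (hT : T.Nonempty) (h0 : 0 ∉ T) : 1 ≤ T.min' hT := by
  have := T.min'_mem hT
  rcases Nat.eq_zero_or_pos (T.min' hT) with h | h
  · exact absurd (h ▸ this) h0
  · exact h

lemma L_le {T : Finset ℕ} (h : T.Nonempty) (x : ℕ) (hx : x ∈ T)
    (hsub : Finset.Icc x (T.max' h) ⊆ T) : L T h ≤ x :=
  Finset.min'_le _ _ (mem_filter.2 ⟨hx, hsub⟩)

lemma caseA_master {T : Finset ℕ} (hT : T.Nonempty) (h0 : 0 ∉ T) (hnp : ¬IsPent T)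
    (hA : T.min' hT + L T hT ≤ T.max' hT + 1) :
    (phi T).sum id = T.sum id ∧ 0 ∉ phi T ∧ ¬IsPent (phi T) ∧
      (phi T).card + 1 = T.card ∧ phi (phi T) = T := by
  set m := T.min' hT with hm
  set M := T.max' hT with hM
  set Lv := L T hT with hL
  have hm1 : 1 ≤ m := min'_pos hT h0
  have hmM : m ≤ M := T.min'_le _ (T.max'_mem hT)
  have hLM : Lv ≤ M := L_le_max hT
  have hmem_le : ∀ x ∈ T, x ≤ M := fun x hx => T.le_max' x hx
  have hmem_ge : ∀ x ∈ T, m ≤ x := fun x hx => T.min'_le x hx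
  have hMT : M + 1 ∉ T := fun h => by have := hmem_le _ h; omega
  -- the element u = M + 1 - m
  have huT : M + 1 - m ∈ T := Icc_L_subset hT (mem_Icc.2 ⟨by omega, by omega⟩)
  -- M ≥ 2 m
  have h2m : 2 * m ≤ M := by
    by_contra hcon
    have hum : m ≤ M + 1 - m := hmem_ge _ huT
    have hMeq : M = 2 * m - 1 := by omega
    have hLm : Lv = m := le_antisymm (by omega) (min_le_L hT)
    have hTI : T = Icc m M := by
      apply le_antisymm
      · intro x hx; exact mem_Icc.2 ⟨hmem_ge x hx, hmem_le x hx⟩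
      · rw [← hLm]; exact Icc_L_subset hT
    exact hnp ⟨m - 1, Or.inr (by rw [hTI]; congr 1 <;> omega)⟩
  have hmu : m < M + 1 - m := by omega
  -- structure of phi T
  have hphi : phi T = insert (M + 1) ((T.erase m).erase (M + 1 - m)) := by
    rw [phi, dif_pos hT, if_pos hA]
  set E := (T.erase m).erase (M + 1 - m) with hE
  have hME : M + 1 ∉ E := fun h => hMT (mem_of_mem_erase (mem_of_mem_erase h))
  have huE : M + 1 - m ∈ T.erase m := mem_erase.2 ⟨by omega, huT⟩
  have hmemE : ∀ x, x ∈ E ↔ (x ∈ T ∧ x ≠ m ∧ x ≠ M + 1 - m) := by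
    intro x
    simp only [hE, mem_erase]
    tauto
  have hmem_phi : ∀ x, x ∈ phi T ↔ (x = M + 1 ∨ (x ∈ T ∧ x ≠ m ∧ x ≠ M + 1 - m)) := by
    intro x; rw [hphi, mem_insert, hmemE]
  have h' : (phi T).Nonempty := ⟨M + 1, (hmem_phi _).2 (Or.inl rfl)⟩
  -- max'
  have hmax : (phi T).max' h' = M + 1 := by
    apply le_antisymm
    · apply max'_le
      intro y hy
      rcases (hmem_phi y).1 hy with h | h
      · omega
      · have := hmem_le y h.1; omega
    · exact le_max' _ _ ((hmem_phi _).2 (Or.inl rfl))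
  -- min' bound
  have hmin : m + 1 ≤ (phi T).min' h' := by
    apply le_min'
    intro y hy
    rcases (hmem_phi y).1 hy with h | h
    · omega
    · have := hmem_ge y h.1; rcases Nat.eq_or_lt_of_le this with h2 | h2
      · exact absurd h2.symm h.2.1
      · omega
  -- u not in phi T
  have hu_phi : M + 1 - m ∉ phi T := by
    rw [hmem_phi]; push_neg
    exact ⟨by omega, fun h1 h2 => rfl⟩
  -- L of phi T
  have hL' : L (phi T) h' = M + 2 - m := by
    apply L_eq h' (M + 2 - m)
    · rw [hmem_phi]
      rcases Nat.eq_or_lt_of_le hm1 with h1 | h1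
      · left; omega
      · right
        refine ⟨Icc_L_subset hT (mem_Icc.2 ⟨by omega, by omega⟩), by omega, by omega⟩
    · rw [hmax]
      intro y hy
      rw [mem_Icc] at hy
      rw [hmem_phi]
      rcases Nat.eq_or_lt_of_le hy.2 with h1 | h1
      · left; omega
      · right
        refine ⟨Icc_L_subset hT (mem_Icc.2 ⟨by omega, by omega⟩), by omega, by omega⟩
    · have : M + 2 - m - 1 = M + 1 - m := by omega
      rw [this]; exact hu_phi
    · omega
  refine ⟨?_, ?_, ?_, ?_, ?_⟩
  · -- sum
    have e1 : E.sum id + (M + 1 - m) = (T.erase m).sum id :=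
      Finset.sum_erase_add _ _ huE
    have e2 : (T.erase m).sum id + m = T.sum id :=
      Finset.sum_erase_add _ _ (T.min'_mem hT)
    rw [hphi, Finset.sum_insert hME]
    simp only [id] at *
    omega
  · -- 0 ∉
    intro h
    rcases (hmem_phi 0).1 h with h | h
    · omega
    · exact h0 h.1
  · -- phi T not pent
    rintro ⟨k, hk | hk⟩
    · obtain ⟨hmin2, hmax2⟩ := eq_Icc_minmax h' hk
      have hu2 : M + 1 - m ∉ Icc (k+1) (2*k) := hk ▸ hu_phi
      rw [mem_Icc] at hu2; push_neg at hu2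
      rw [hmax] at hmax2
      rw [hmin2] at hmin
      omega
    · obtain ⟨hmin2, hmax2⟩ := eq_Icc_minmax h' hk
      have hu2 : M + 1 - m ∉ Icc (k+1) (2*k+1) := hk ▸ hu_phi
      rw [mem_Icc] at hu2; push_neg at hu2
      rw [hmax] at hmax2
      rw [hmin2] at hmin
      omega
  · -- card
    have c1 : (T.erase m).card = T.card - 1 := Finset.card_erase_of_mem (T.min'_mem hT)
    have c2 : E.card = (T.erase m).card - 1 := Finset.card_erase_of_mem huE
    have c3 : (phi T).card = E.card + 1 := by rw [hphi, Finset.card_insert_of_notMem hME]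
    have c4 : 1 ≤ (T.erase m).card := Finset.card_pos.2 ⟨_, huE⟩
    have c5 : 1 ≤ T.card := Finset.card_pos.2 hT
    omega
  · -- involution
    have hcond : ¬((phi T).min' h' + L (phi T) h' ≤ (phi T).max' h' + 1) := by
      rw [hL', hmax]; omega
    rw [phi, dif_pos h', if_neg hcond, hL', hmax, hphi]
    have e1 : M + 1 + 1 - (M + 2 - m) = m := by omega
    have e2 : M + 2 - m - 1 = M + 1 - m := by omega
    rw [e1, e2, Finset.erase_insert hME, hE,
      Finset.insert_erase huE, Finset.insert_erase (T.min'_mem hT)]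

lemma caseB_master {T : Finset ℕ} (hT : T.Nonempty) (h0 : 0 ∉ T) (hnp : ¬IsPent T)
    (hB : ¬(T.min' hT + L T hT ≤ T.max' hT + 1)) :
    (phi T).sum id = T.sum id ∧ 0 ∉ phi T ∧ ¬IsPent (phi T) ∧
      T.card + 1 = (phi T).card ∧ phi (phi T) = T := by
  set m := T.min' hT with hm
  set M := T.max' hT with hM
  set Lv := L T hT with hL
  push_neg at hB
  have hm1 : 1 ≤ m := min'_pos hT h0
  have hmM : m ≤ M := T.min'_le _ (T.max'_mem hT)
  have hLM : Lv ≤ M := L_le_max hT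
  have hmL : m ≤ Lv := min_le_L hT
  have hpredL : Lv - 1 ∉ T := pred_L_not_mem hT h0
  have hmem_le : ∀ x ∈ T, x ≤ M := fun x hx => T.le_max' x hx
  have hmem_ge : ∀ x ∈ T, m ≤ x := fun x hx => T.min'_le x hx
  -- the key inequality M + 3 ≤ 2 L
  have hkey : M + 3 ≤ 2 * Lv := by
    rcases Nat.eq_or_lt_of_le hmL with h1 | h1
    · -- m = L : T is an interval
      have hTI : T = Icc m M := by
        apply le_antisymm
        · intro x hx; exact mem_Icc.2 ⟨hmem_ge x hx, hmem_le x hx⟩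
        · rw [h1]; exact Icc_L_subset hT
      have : M ≠ 2 * m - 2 := by
        intro hMeq
        exact hnp ⟨m - 1, Or.inl (by rw [hTI]; congr 1 <;> omega)⟩
      omega
    · omega
  have hrT : M + 1 - Lv ∉ T := fun h => by have := hmem_ge _ h; omega
  have hphi : phi T = insert (M + 1 - Lv) (insert (Lv - 1) (T.erase M)) := by
    rw [phi, dif_pos hT, if_neg (by omega)]
  have hLe : Lv - 1 ∉ T.erase M := fun h => hpredL (mem_of_mem_erase h)
  have hri : M + 1 - Lv ∉ insert (Lv - 1) (T.erase M) := by
    rw [mem_insert]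
    push_neg
    exact ⟨by omega, fun h => hrT (mem_of_mem_erase h)⟩
  have hmem_phi : ∀ x, x ∈ phi T ↔ (x = M + 1 - Lv ∨ x = Lv - 1 ∨ (x ∈ T ∧ x ≠ M)) := by
    intro x
    rw [hphi, mem_insert, mem_insert, mem_erase]
    tauto
  have h' : (phi T).Nonempty := ⟨M + 1 - Lv, (hmem_phi _).2 (Or.inl rfl)⟩
  have hmax : (phi T).max' h' = M - 1 := by
    apply le_antisymm
    · apply max'_le
      intro y hy
      rcases (hmem_phi y).1 hy with h | h | h
      · omega
      · omega
      · have := hmem_le y h.1; omega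
    · apply le_max'
      rw [hmem_phi]
      rcases Nat.eq_or_lt_of_le hLM with h1 | h1
      · right; left; omega
      · right; right
        exact ⟨Icc_L_subset hT (mem_Icc.2 ⟨by omega, by omega⟩), by omega⟩
  have hmin : (phi T).min' h' = M + 1 - Lv := by
    apply le_antisymm
    · exact min'_le _ _ ((hmem_phi _).2 (Or.inl rfl))
    · apply le_min'
      intro y hy
      rcases (hmem_phi y).1 hy with h | h | h
      · omega
      · omega
      · have := hmem_ge y h.1; omega
  have hL' : L (phi T) h' ≤ Lv - 1 := by
    apply L_le h' (Lv - 1) ((hmem_phi _).2 (Or.inr (Or.inl rfl)))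
    rw [hmax]
    intro y hy
    rw [mem_Icc] at hy
    rw [hmem_phi]
    rcases Nat.eq_or_lt_of_le hy.1 with h1 | h1
    · right; left; omega
    · right; right
      exact ⟨Icc_L_subset hT (mem_Icc.2 ⟨by omega, by omega⟩), by omega⟩
  have hL'1 : 1 ≤ L (phi T) h' := L_pos h' (by
    intro h
    rcases (hmem_phi 0).1 h with h | h | h
    · omega
    · omega
    · exact h0 h.1)
  refine ⟨?_, ?_, ?_, ?_, ?_⟩
  · -- sum
    have e2 : (T.erase M).sum id + M = T.sum id :=
      Finset.sum_erase_add _ _ (T.max'_mem hT)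
    rw [hphi, Finset.sum_insert hri, Finset.sum_insert hLe]
    simp only [id] at *
    omega
  · intro h
    rcases (hmem_phi 0).1 h with h | h | h
    · omega
    · omega
    · exact h0 h.1
  · -- not pent
    rintro ⟨k, hk | hk⟩
    · obtain ⟨hmin2, hmax2⟩ := eq_Icc_minmax h' hk
      rw [hmax] at hmax2; rw [hmin] at hmin2
      omega
    · obtain ⟨hmin2, hmax2⟩ := eq_Icc_minmax h' hk
      rw [hmax] at hmax2; rw [hmin] at hmin2
      omega
  · -- card
    have c1 : (T.erase M).card = T.card - 1 := Finset.card_erase_of_mem (T.max'_mem hT)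
    have c5 : 1 ≤ T.card := Finset.card_pos.2 hT
    rw [hphi, Finset.card_insert_of_notMem hri, Finset.card_insert_of_notMem hLe]
    omega
  · -- involution
    have hcond : (phi T).min' h' + L (phi T) h' ≤ (phi T).max' h' + 1 := by
      rw [hmin, hmax]; omega
    rw [phi, dif_pos h', if_pos hcond, hmin, hmax]
    have e1 : M - 1 + 1 = M := by omega
    have e2 : M - (M + 1 - Lv) = Lv - 1 := by omega
    rw [e1, e2, hphi, Finset.erase_insert hri, Finset.erase_insert hLe,
      Finset.insert_erase (T.max'_mem hT)]

lemma phi_spec {T : Finset ℕ} (hT : T.Nonempty) (h0 : 0 ∉ T) (hnp : ¬IsPent T) :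
    (phi T).sum id = T.sum id ∧ 0 ∉ phi T ∧ ¬IsPent (phi T) ∧
      ((phi T).card + 1 = T.card ∨ T.card + 1 = (phi T).card) ∧ phi (phi T) = T := by
  by_cases h : T.min' hT + L T hT ≤ T.max' hT + 1
  · obtain ⟨a, b, c, d, e⟩ := caseA_master hT h0 hnp h
    exact ⟨a, b, c, Or.inl d, e⟩
  · obtain ⟨a, b, c, d, e⟩ := caseB_master hT h0 hnp h
    exact ⟨a, b, c, Or.inr d, e⟩

lemma e_inj {a b : ℤ} (h : a*(3*a+1) = b*(3*b+1)) : a = b := by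
  have h2 : (a - b) * (3*(a+b)+1) = 0 := by linear_combination h
  rcases mul_eq_zero.1 h2 with h3 | h3 <;> omega

lemma empty_pent : IsPent (∅ : Finset ℕ) :=
  ⟨0, Or.inl (by rw [Finset.Icc_eq_empty (by omega)])⟩

/-- The signed count of partitions of `n` into distinct parts. -/
def c (n : ℕ) : ℤ := ∑ T ∈ Fn n, (-1)^T.card

lemma sum_nonpent_zero (n : ℕ) [DecidablePred IsPent] :
    ∑ T ∈ (Fn n).filter (fun T => ¬ IsPent T), (-1 : ℤ)^T.card = 0 := by
  apply Finset.sum_involution (fun T _ => phi T)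
  · -- signs cancel
    intro T hTmem
    rw [mem_filter, mem_Fn] at hTmem
    obtain ⟨⟨h0, hsum⟩, hnp⟩ := hTmem
    have hT : T.Nonempty := by
      rcases Finset.eq_empty_or_nonempty T with h | h
      · exact absurd (h ▸ empty_pent) (h ▸ hnp)
      · exact h
    have hspec := phi_spec hT h0 hnp
    rcases hspec.2.2.2.1 with hc | hc
    · rw [← hc, pow_succ]; ring
    · rw [← hc, pow_succ]; ring
  · intro T hTmem hne heq
    have h1 : ((-1 : ℤ))^T.card ≠ 0 := pow_ne_zero _ (by norm_num)
    rw [mem_filter, mem_Fn] at hTmem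
    obtain ⟨⟨h0, hsum⟩, hnp⟩ := hTmem
    have hT : T.Nonempty := by
      rcases Finset.eq_empty_or_nonempty T with h | h
      · exact absurd (h ▸ empty_pent) (h ▸ hnp)
      · exact h
    have hspec := phi_spec hT h0 hnp
    rcases hspec.2.2.2.1 with hc | hc <;> rw [heq] at hc <;> omega
  · -- membership
    intro T hTmem
    rw [mem_filter, mem_Fn] at hTmem ⊢
    obtain ⟨⟨h0, hsum⟩, hnp⟩ := hTmem
    have hT : T.Nonempty := by
      rcases Finset.eq_empty_or_nonempty T with h | h
      · exact absurd (h ▸ empty_pent) (h ▸ hnp)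
      · exact h
    have hspec := phi_spec hT h0 hnp
    exact ⟨⟨hspec.2.1, hspec.1.trans hsum⟩, hspec.2.2.1⟩
  · intro T hTmem
    rw [mem_filter, mem_Fn] at hTmem
    obtain ⟨⟨h0, hsum⟩, hnp⟩ := hTmem
    have hT : T.Nonempty := by
      rcases Finset.eq_empty_or_nonempty T with h | h
      · exact absurd (h ▸ empty_pent) (h ▸ hnp)
      · exact h
    exact (phi_spec hT h0 hnp).2.2.2.2

lemma zero_not_mem_Icc {a b : ℕ} (ha : 1 ≤ a) : 0 ∉ Icc a b := by
  rw [mem_Icc]; omega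

lemma sumA_eq_sumA {k k' : ℕ} (h : (Icc (k'+1) (2*k')).sum id = (Icc (k+1) (2*k)).sum id) :
    k' = k := by
  have h1 := sumA k
  have h2 := sumA k'
  have h3 : (k' : ℤ) * (3*k'+1) = (k : ℤ) * (3*k+1) := by
    have : k' * (3*k'+1) = k * (3*k+1) := by omega
    exact_mod_cast this
  exact_mod_cast e_inj h3

lemma sumB_ne_sumA {k k' : ℕ} (h : (Icc (k'+1) (2*k'+1)).sum id = (Icc (k+1) (2*k)).sum id) :
    False := by
  have h1 := sumA k
  have h2 := sumB k'
  have h3 : (-(k' : ℤ)-1) * (3*(-(k' : ℤ)-1)+1) = (k : ℤ) * (3*k+1) := by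
    have : (k'+1) * (3*k'+2) = k * (3*k+1) := by omega
    have h4 : ((k' : ℤ)+1) * (3*k'+2) = (k : ℤ) * (3*k+1) := by exact_mod_cast this
    linear_combination h4
  have := e_inj h3
  omega

lemma sumB_eq_sumB {k k' : ℕ}
    (h : (Icc (k'+1) (2*k'+1)).sum id = (Icc (k+1) (2*k+1)).sum id) : k' = k := by
  have h1 := sumB k
  have h2 := sumB k'
  have h3 : (-(k' : ℤ)-1) * (3*(-(k' : ℤ)-1)+1) = (-(k : ℤ)-1) * (3*(-(k : ℤ)-1)+1) := by
    have : (k'+1) * (3*k'+2) = (k+1) * (3*k+2) := by omega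
    have h4 : ((k' : ℤ)+1) * (3*k'+2) = ((k : ℤ)+1) * (3*k+2) := by exact_mod_cast this
    linear_combination h4
  have := e_inj h3
  omega

lemma filter_pent_A (k : ℕ) [DecidablePred IsPent] :
    (Fn ((Icc (k+1) (2*k)).sum id)).filter IsPent = {Icc (k+1) (2*k)} := by
  ext T
  rw [mem_filter, mem_Fn, mem_singleton]
  constructor
  · rintro ⟨⟨h0, hsum⟩, k', hk' | hk'⟩
    · subst hk'; rw [sumA_eq_sumA hsum]
    · exact absurd (hk' ▸ hsum) (fun h => sumB_ne_sumA h)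
  · rintro rfl
    exact ⟨⟨zero_not_mem_Icc (by omega), rfl⟩, ⟨k, Or.inl rfl⟩⟩

lemma filter_pent_B (k : ℕ) [DecidablePred IsPent] :
    (Fn ((Icc (k+1) (2*k+1)).sum id)).filter IsPent = {Icc (k+1) (2*k+1)} := by
  ext T
  rw [mem_filter, mem_Fn, mem_singleton]
  constructor
  · rintro ⟨⟨h0, hsum⟩, k', hk' | hk'⟩
    · exfalso
      subst hk'
      have h1 := sumA k'
      have h2 := sumB k
      have h3 : (-(k : ℤ)-1) * (3*(-(k : ℤ)-1)+1) = (k' : ℤ) * (3*k'+1) := by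
        have : (k+1) * (3*k+2) = k' * (3*k'+1) := by omega
        have h4 : ((k : ℤ)+1) * (3*k+2) = (k' : ℤ) * (3*k'+1) := by exact_mod_cast this
        linear_combination h4
      have := e_inj h3
      omega
    · subst hk'; rw [sumB_eq_sumB hsum]
  · rintro rfl
    exact ⟨⟨zero_not_mem_Icc (by omega), rfl⟩, ⟨k, Or.inr rfl⟩⟩

lemma filter_pent_0 (n : ℕ) [DecidablePred IsPent]
    (hA : ∀ k, n ≠ (Icc (k+1) (2*k)).sum id) (hB : ∀ k, n ≠ (Icc (k+1) (2*k+1)).sum id) :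
    (Fn n).filter IsPent = ∅ := by
  ext T
  rw [mem_filter, mem_Fn]
  simp only [Finset.notMem_empty, iff_false]
  rintro ⟨⟨h0, hsum⟩, k', hk' | hk'⟩
  · exact hA k' (by rw [← hsum, hk'])
  · exact hB k' (by rw [← hsum, hk'])

lemma c_split (n : ℕ) [DecidablePred IsPent] :
    c n = ∑ T ∈ (Fn n).filter IsPent, (-1 : ℤ)^T.card := by
  rw [c, ← Finset.sum_filter_add_sum_filter_not (Fn n) IsPent, sum_nonpent_zero, add_zero]

lemma c_A (k : ℕ) : c ((Icc (k+1) (2*k)).sum id) = (-1)^k := by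
  classical
  rw [c_split, filter_pent_A, Finset.sum_singleton, cardA]

lemma c_B (k : ℕ) : c ((Icc (k+1) (2*k+1)).sum id) = (-1)^(k+1) := by
  classical
  rw [c_split, filter_pent_B, Finset.sum_singleton, cardB]

lemma c_0 (n : ℕ) (hA : ∀ k, n ≠ (Icc (k+1) (2*k)).sum id)
    (hB : ∀ k, n ≠ (Icc (k+1) (2*k+1)).sum id) : c n = 0 := by
  classical
  rw [c_split, filter_pent_0 n hA hB, Finset.sum_empty]

/-! ### Analytic part -/

section Analytic

variable {q : ℂ}

/-- The term attached to a finite set of indices in the expansion of `∏ (1 - q^(i+1))`. -/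
noncomputable def a (q : ℂ) (S : Finset ℕ) : ℂ := ∏ i ∈ S, (-(q^(i+1)))

/-- The weight of a finite index set. -/
def wt (S : Finset ℕ) : ℕ := ∑ i ∈ S, (i+1)

lemma a_eq (q : ℂ) (S : Finset ℕ) : a q S = (-1)^S.card * q^(wt S) := by
  rw [a, wt, ← Finset.prod_pow_eq_pow_sum, ← Finset.prod_const (-1 : ℂ),
    ← Finset.prod_mul_distrib]
  apply Finset.prod_congr rfl
  intro i _
  ring

lemma summable_g (hq : ‖q‖ < 1) : Summable (fun S : Finset ℕ => ∏ i ∈ S, ‖q‖^(i+1)) := by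
  have h0 : (0:ℝ) ≤ ‖q‖ := norm_nonneg q
  have hgeo : Summable (fun n : ℕ => ‖q‖^(n+1)) := by
    simpa [pow_succ, mul_comm] using (summable_geometric_of_lt_one h0 hq).mul_left ‖q‖
  apply summable_of_sum_le (c := Real.exp (∑' n : ℕ, ‖q‖^(n+1)))
  · intro S
    exact Finset.prod_nonneg fun i _ => pow_nonneg h0 _
  · intro u
    set N := (u.sup fun S => S.sup id) + 1 with hN
    have hsub : u ⊆ (Finset.range N).powerset := by
      intro S hS
      rw [Finset.mem_powerset]
      intro i hi
      rw [Finset.mem_range]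
      have h1 : i ≤ S.sup id := Finset.le_sup (f := id) hi
      have h2 : S.sup id ≤ u.sup fun S => S.sup id := Finset.le_sup hS
      omega
    calc ∑ S ∈ u, ∏ i ∈ S, ‖q‖^(i+1)
        ≤ ∑ S ∈ (Finset.range N).powerset, ∏ i ∈ S, ‖q‖^(i+1) := by
          apply Finset.sum_le_sum_of_subset_of_nonneg hsub
          intro S _ _
          exact Finset.prod_nonneg fun i _ => pow_nonneg h0 _
      _ = ∏ i ∈ Finset.range N, (‖q‖^(i+1) + 1) := by
          rw [Finset.prod_add]
          apply Finset.sum_congr rfl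
          intro t _
          simp
      _ ≤ ∏ i ∈ Finset.range N, Real.exp (‖q‖^(i+1)) := by
          apply Finset.prod_le_prod
          · intro i _; positivity
          · intro i _; exact Real.add_one_le_exp _
      _ = Real.exp (∑ i ∈ Finset.range N, ‖q‖^(i+1)) := (Real.exp_sum _ _).symm
      _ ≤ Real.exp (∑' n : ℕ, ‖q‖^(n+1)) := by
          apply Real.exp_le_exp.2
          exact Summable.sum_le_tsum _ (fun i _ => pow_nonneg h0 _) hgeo

lemma summable_a (hq : ‖q‖ < 1) : Summable (a q) := by
  apply Summable.of_norm
  have := summable_g hq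
  convert this using 2 with S
  rw [a, norm_prod]
  apply Finset.prod_congr rfl
  intro i _
  rw [norm_neg, norm_pow]

lemma hasProd_a (hq : ‖q‖ < 1) :
    HasProd (fun n : ℕ => 1 - q^(n+1)) (∑' S : Finset ℕ, a q S) := by
  have hsum : HasSum (a q) (∑' S : Finset ℕ, a q S) := (summable_a hq).hasSum
  have hpow : Filter.Tendsto (fun s : Finset ℕ => s.powerset) Filter.atTop Filter.atTop :=
    Filter.tendsto_atTop_finset_of_monotone (fun s t hst => Finset.powerset_mono.2 hst)
      (fun t => ⟨t, Finset.mem_powerset_self t⟩)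
  have := hsum.comp hpow
  rw [HasProd]
  convert this using 2 with s
  rw [Function.comp_apply]
  have h1 : ∀ b ∈ s, (1 - q^(b+1)) = (-(q^(b+1)) + 1) := by intro b _; ring
  rw [Finset.prod_congr rfl h1, Finset.prod_add]
  apply Finset.sum_congr rfl
  intro t _
  simp [a]
  rfl

/-- Fiber of index sets of weight `n`. -/
def Gn (n : ℕ) : Finset (Finset ℕ) := ((Finset.range n).powerset).filter (fun S => wt S = n)

lemma wt_lt {S : Finset ℕ} {i : ℕ} (hi : i ∈ S) : i + 1 ≤ wt S :=
  Finset.single_le_sum (f := fun i => i + 1) (fun j _ => Nat.zero_le _) hi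

lemma mem_Gn {n : ℕ} {S : Finset ℕ} : S ∈ Gn n ↔ wt S = n := by
  rw [Gn, Finset.mem_filter, Finset.mem_powerset]
  constructor
  · exact fun h => h.2
  · intro h
    refine ⟨fun i hi => Finset.mem_range.2 ?_, h⟩
    have := wt_lt hi
    omega

lemma sum_Gn (q : ℂ) (n : ℕ) : ∑ S ∈ Gn n, a q S = (c n : ℂ) * q^n := by
  have h1 : ∀ S ∈ Gn n, a q S = ((-1:ℂ))^S.card * q^n := by
    intro S hS
    rw [a_eq, mem_Gn.1 hS]
  rw [Finset.sum_congr rfl h1, ← Finset.sum_mul]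
  congr 1
  have h2 : (c n : ℂ) = ∑ T ∈ Fn n, ((-1:ℂ))^T.card := by
    rw [c]; push_cast; rfl
  rw [h2]
  apply Finset.sum_nbij' (fun S => S.image (· + 1)) (fun T => T.image (· - 1))
  · intro S hS
    rw [mem_Fn]
    constructor
    · intro h
      obtain ⟨x, _, hx⟩ := Finset.mem_image.1 h
      omega
    · rw [Finset.sum_image (fun x _ y _ h => by omega)]
      exact mem_Gn.1 hS
  · intro T hT
    rw [mem_Fn] at hT
    rw [mem_Gn, wt, Finset.sum_image (fun x hx y hy h => by
      have hx0 : x ≠ 0 := fun h0 => hT.1 (h0 ▸ hx)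
      have hy0 : y ≠ 0 := fun h0 => hT.1 (h0 ▸ hy)
      omega)]
    rw [← hT.2]
    apply Finset.sum_congr rfl
    intro x hx
    have hx0 : x ≠ 0 := fun h0 => hT.1 (h0 ▸ hx)
    simp only [id]
    omega
  · intro S _
    rw [Finset.image_image]
    have : S.image ((· - 1) ∘ (· + 1)) = S.image id :=
      Finset.image_congr (fun x _ => by simp)
    rw [this, Finset.image_id]
  · intro T hT
    rw [mem_Fn] at hT
    rw [Finset.image_image]
    have : T.image ((· + 1) ∘ (· - 1)) = T.image id := by
      apply Finset.image_congr
      intro x hx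
      have hx0 : x ≠ 0 := fun h0 => hT.1 (h0 ▸ hx)
      simp only [Function.comp_apply, id]
      omega
    rw [this, Finset.image_id]
  · intro S _
    rw [Finset.card_image_of_injective _ (fun x y h => by omega)]

lemma abs_c_le (n : ℕ) : |c n| ≤ 1 := by
  classical
  by_cases hA : ∃ k, n = (Icc (k+1) (2*k)).sum id
  · obtain ⟨k, rfl⟩ := hA
    rw [c_A]
    rcases Nat.even_or_odd k with h | h
    · rw [h.neg_one_pow]; norm_num
    · rw [h.neg_one_pow]; norm_num
  · by_cases hB : ∃ k, n = (Icc (k+1) (2*k+1)).sum id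
    · obtain ⟨k, rfl⟩ := hB
      rw [c_B]
      rcases Nat.even_or_odd (k+1) with h | h
      · rw [h.neg_one_pow]; norm_num
      · rw [h.neg_one_pow]; norm_num
    · push_neg at hA hB
      rw [c_0 n hA hB]
      norm_num

lemma summable_cq (hq : ‖q‖ < 1) : Summable (fun n : ℕ => (c n : ℂ) * q^n) := by
  apply Summable.of_norm_bounded (g := fun n => ‖q‖^n)
    (summable_geometric_of_lt_one (norm_nonneg q) hq)
  intro n
  rw [norm_mul, norm_pow]
  have h1 : ‖(c n : ℂ)‖ ≤ 1 := by
    rw [Complex.norm_intCast]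
    exact_mod_cast abs_c_le n
  calc ‖(c n : ℂ)‖ * ‖q‖^n ≤ 1 * ‖q‖^n :=
        mul_le_mul_of_nonneg_right h1 (pow_nonneg (norm_nonneg q) n)
    _ = ‖q‖^n := one_mul _

lemma tsum_a_eq (hq : ‖q‖ < 1) :
    ∑' S : Finset ℕ, a q S = ∑' n : ℕ, (c n : ℂ) * q^n := by
  set H : ℕ → Finset (Finset ℕ) :=
    fun N => ((Finset.range N).powerset).filter (fun S => wt S < N) with hH
  have hmemH : ∀ N S, S ∈ H N ↔ wt S < N := by
    intro N S
    rw [hH]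
    rw [Finset.mem_filter, Finset.mem_powerset]
    constructor
    · exact fun h => h.2
    · intro h
      refine ⟨fun i hi => Finset.mem_range.2 ?_, h⟩
      have := wt_lt hi
      omega
  have hHb : ∀ N, H N = (Finset.range N).biUnion Gn := by
    intro N
    ext S
    rw [hmemH, Finset.mem_biUnion]
    constructor
    · intro h; exact ⟨wt S, Finset.mem_range.2 h, mem_Gn.2 rfl⟩
    · rintro ⟨n, hn, hS⟩
      rw [mem_Gn.1 hS]
      exact Finset.mem_range.1 hn
  have h2 : ∀ N, ∑ S ∈ H N, a q S = ∑ n ∈ Finset.range N, (c n : ℂ) * q^n := by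
    intro N
    rw [hHb]
    rw [Finset.sum_biUnion (fun x _ y _ hxy => Finset.disjoint_left.2
      (fun S hS hS' => hxy (by rw [← mem_Gn.1 hS, mem_Gn.1 hS'])))]
    exact Finset.sum_congr rfl (fun n _ => sum_Gn q n)
  have hlim1 : Filter.Tendsto (fun N => ∑ S ∈ H N, a q S) Filter.atTop
      (nhds (∑' S : Finset ℕ, a q S)) := by
    have hmono : Monotone H := by
      intro N M hNM S hS
      rw [hmemH] at *
      omega
    have hex : ∀ S : Finset ℕ, ∃ N, S ∈ H N := fun S => ⟨wt S + 1, (hmemH _ _).2 (by omega)⟩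
    exact (summable_a hq).hasSum.comp (Filter.tendsto_atTop_finset_of_monotone hmono hex)
  have hlim2 : Filter.Tendsto (fun N => ∑ n ∈ Finset.range N, (c n : ℂ) * q^n) Filter.atTop
      (nhds (∑' n : ℕ, (c n : ℂ) * q^n)) := (summable_cq hq).hasSum.tendsto_sum_nat
  refine tendsto_nhds_unique ?_ hlim2
  convert hlim1 using 2 with N
  rw [h2]

/-- The pentagonal number attached to `j : ℤ`, as a natural number. -/
noncomputable def pentNat (j : ℤ) : ℕ :=
  if 0 ≤ j then (Icc (j.toNat+1) (2*j.toNat)).sum id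
  else (Icc ((-j-1).toNat+1) (2*(-j-1).toNat+1)).sum id

lemma two_pentNat (j : ℤ) : 2 * (pentNat j : ℤ) = j * (3*j+1) := by
  rw [pentNat]
  split_ifs with h
  · have h1 := sumA j.toNat
    have h2 : ((j.toNat : ℤ)) = j := Int.toNat_of_nonneg h
    have : (2 * (Icc (j.toNat+1) (2*j.toNat)).sum id : ℤ) = (j.toNat : ℤ) * (3*(j.toNat:ℤ)+1) := by
      exact_mod_cast h1
    rw [this, h2]
  · push_neg at h
    set k := (-j-1).toNat with hk
    have hjk : (k : ℤ) = -j-1 := Int.toNat_of_nonneg (by omega)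
    have h1 := sumB k
    have : (2 * (Icc (k+1) (2*k+1)).sum id : ℤ) = ((k:ℤ)+1) * (3*(k:ℤ)+2) := by
      exact_mod_cast h1
    rw [this]
    have hj : j = -(k:ℤ)-1 := by omega
    rw [hj]; ring

lemma pentNat_inj : Function.Injective pentNat := by
  intro j j' h
  have h1 := two_pentNat j
  have h2 := two_pentNat j'
  apply e_inj
  rw [← h1, ← h2, h]

lemma c_pentNat (j : ℤ) : ((c (pentNat j)) : ℂ) = (-1:ℂ)^j := by
  rw [pentNat]
  split_ifs with h
  · rw [c_A]
    push_cast
    rw [← zpow_natCast (-1 : ℂ), Int.toNat_of_nonneg h]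
  · push_neg at h
    set k := (-j-1).toNat with hk
    have hjk : (k : ℤ) = -j-1 := Int.toNat_of_nonneg (by omega)
    rw [c_B]
    have hj : j = -((k:ℤ)+1) := by omega
    rw [hj]
    push_cast
    rw [zpow_neg]
    have : ((k:ℤ)+1) = ((k+1 : ℕ) : ℤ) := by push_cast; ring
    rw [this, zpow_natCast]
    rcases Nat.even_or_odd (k+1) with he | he
    · rw [he.neg_one_pow]; norm_num
    · rw [he.neg_one_pow]; norm_num

lemma exists_pentNat {n : ℕ} (h : c n ≠ 0) : ∃ j : ℤ, pentNat j = n := by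
  classical
  by_cases hA : ∃ k, n = (Icc (k+1) (2*k)).sum id
  · obtain ⟨k, rfl⟩ := hA
    refine ⟨(k : ℤ), ?_⟩
    rw [pentNat, if_pos (by positivity), Int.toNat_natCast]
  · by_cases hB : ∃ k, n = (Icc (k+1) (2*k+1)).sum id
    · obtain ⟨k, rfl⟩ := hB
      refine ⟨-((k:ℤ)+1), ?_⟩
      rw [pentNat, if_neg (by omega)]
      have h1 : (-(-((k:ℤ)+1))-1) = (k:ℤ) := by ring
      rw [h1, Int.toNat_natCast]
    · push_neg at hA hB
      exact absurd (c_0 n hA hB) h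

lemma tsum_cq_eq (hq0 : q ≠ 0) :
    ∑' n : ℕ, (c n : ℂ) * q^n = ∑' j : ℤ, (-1:ℂ)^j * q^(pentNat j) := by
  apply tsum_eq_tsum_of_ne_zero_bij (fun j => pentNat j.val)
  · intro x y h
    exact Subtype.ext (pentNat_inj h)
  · intro n hn
    rw [Function.mem_support] at hn
    have hcn : c n ≠ 0 := by
      intro h
      apply hn
      rw [h]
      norm_num
    obtain ⟨j, hj⟩ := exists_pentNat hcn
    have hgj : (-1:ℂ)^j * q^(pentNat j) ≠ 0 :=
      mul_ne_zero (zpow_ne_zero _ (by norm_num)) (pow_ne_zero _ hq0)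
    exact ⟨⟨j, hgj⟩, hj⟩
  · intro x
    rw [c_pentNat]

end Analytic

end PentNT

open Complex

/-- The theta representation of the Dedekind eta function (Euler's pentagonal number
theorem): `η(τ) = ∑_{n∈ℤ} (-1)ⁿ e^{πiτ(6n+1)²/12}`. -/
theorem eta_theta_representation (τ : ℂ) (hτ : 0 < τ.im) :
    Complex.exp (Real.pi * I * τ / 12)
        * ∏' n : ℕ, (1 - Complex.exp (2 * Real.pi * I * ((n : ℂ) + 1) * τ))
      = ∑' n : ℤ, (-1 : ℂ) ^ n
          * Complex.exp (Real.pi * I * τ * (6 * (n : ℂ) + 1) ^ 2 / 12) := by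
  set q : ℂ := Complex.exp (2 * Real.pi * I * τ) with hqdef
  have hq0 : q ≠ 0 := Complex.exp_ne_zero _
  have hq : ‖q‖ < 1 := by
    rw [hqdef, Complex.norm_exp]
    apply Real.exp_lt_one_iff.2
    have : (2 * (Real.pi:ℂ) * I * τ).re = -(2 * Real.pi * τ.im) := by
      simp [Complex.mul_re, Complex.mul_im]
      try ring
    rw [this]
    have := Real.pi_pos
    nlinarith
  have hterm : ∀ n : ℕ, Complex.exp (2 * Real.pi * I * ((n : ℂ) + 1) * τ) = q^(n+1) := by
    intro n
    rw [hqdef, ← Complex.exp_nat_mul]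
    congr 1
    push_cast
    ring
  have hrterm : ∀ n : ℤ, Complex.exp (Real.pi * I * τ * (6 * (n : ℂ) + 1) ^ 2 / 12)
      = Complex.exp (Real.pi * I * τ / 12) * q^(PentNT.pentNat n) := by
    intro n
    rw [hqdef, ← Complex.exp_nat_mul, ← Complex.exp_add]
    congr 1
    have hc : (2:ℂ) * (PentNT.pentNat n : ℂ) = (n:ℂ) * (3*(n:ℂ)+1) := by
      exact_mod_cast congrArg (Int.cast : ℤ → ℂ) (PentNT.two_pentNat n)
    linear_combination (-(Real.pi:ℂ) * I * τ) * hc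
  have hprod : (∏' n : ℕ, (1 - Complex.exp (2 * Real.pi * I * ((n : ℂ) + 1) * τ)))
      = ∑' j : ℤ, (-1:ℂ)^j * q^(PentNT.pentNat j) := by
    have h1 : (∏' n : ℕ, (1 - Complex.exp (2 * Real.pi * I * ((n : ℂ) + 1) * τ)))
        = ∏' n : ℕ, (1 - q^(n+1)) := by
      apply tprod_congr
      intro n
      rw [hterm]
    rw [h1, (PentNT.hasProd_a hq).tprod_eq, PentNT.tsum_a_eq hq, PentNT.tsum_cq_eq hq0]
  rw [hprod]
  rw [← tsum_mul_left]
  apply tsum_congr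
  intro j
  rw [hrterm]
  ring
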